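/- arXiv:0802.2544 — 2 statements merged into one kernel-verified Lean document; each statement's English description precedes it below -/
import Mathlib

section
/- For every t ∈ ℝ, the maximum of the function g_t(x,y,z) = tr(J_{μ_t}(x·e₇ + y·e₈ + z·e₉)⁴) over the unit sphere {(x,y,z) ∈ ℝ³ : x² + y² + z² = 1} equals 2(1+t⁴), and it is attained at (x,y,z) = (1,0,0). -/
open Matrix Finset Real Filter

noncomputable section

/-- The canonical basis vector `eᵢ` of `ℝ⁹` (0-indexed: `e 0 = e₁`, …, `e 8 = e₉`). -/
def e (i : Fin 9) : Fin 9 → ℝ := Pi.single i 1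

/-- Half of the structure constants of `μ_t` (before antisymmetrization):
`μ_t(e₅,e₄)=e₇, μ_t(e₁,e₆)=e₈, μ_t(e₃,e₂)=e₉, μ_t(e₃,e₆)=t e₇, μ_t(e₅,e₂)=t e₈, μ_t(e₁,e₄)=t e₉`. -/
def muHalf (t : ℝ) (i j k : Fin 9) : ℝ :=
  (if i = 4 ∧ j = 3 ∧ k = 6 then (1:ℝ) else 0) +
  (if i = 0 ∧ j = 5 ∧ k = 7 then (1:ℝ) else 0) +
  (if i = 2 ∧ j = 1 ∧ k = 8 then (1:ℝ) else 0) +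
  (if i = 2 ∧ j = 5 ∧ k = 6 then t else 0) +
  (if i = 4 ∧ j = 1 ∧ k = 7 then t else 0) +
  (if i = 0 ∧ j = 3 ∧ k = 8 then t else 0)

/-- The (antisymmetric) structure constants of `μ_t`. -/
def muC (t : ℝ) (i j k : Fin 9) : ℝ := muHalf t i j k - muHalf t j i k

/-- The two-step nilpotent Lie bracket `μ_t` on `ℝ⁹`. -/
def mu (t : ℝ) (X Y : Fin 9 → ℝ) : Fin 9 → ℝ :=
  fun k => ∑ i, ∑ j, X i * Y j * muC t i j k

/-- Structure constants of `μ̃_t`: those of `μ_t` plus `μ̃_t(e₁,e₂)=e₇`. -/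
def muTildeHalf (t : ℝ) (i j k : Fin 9) : ℝ :=
  muHalf t i j k + (if i = 0 ∧ j = 1 ∧ k = 6 then (1:ℝ) else 0)

def muTildeC (t : ℝ) (i j k : Fin 9) : ℝ := muTildeHalf t i j k - muTildeHalf t j i k

/-- The two-step nilpotent Lie bracket `μ̃_t` on `ℝ⁹`. -/
def muTilde (t : ℝ) (X Y : Fin 9 → ℝ) : Fin 9 → ℝ :=
  fun k => ∑ i, ∑ j, X i * Y j * muTildeC t i j k

/-- Structure constants of `μ̄_t`: those of `μ̃_t` plus `μ̄_t(e₃,e₄)=e₈`. -/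
def muBarHalf (t : ℝ) (i j k : Fin 9) : ℝ :=
  muTildeHalf t i j k + (if i = 2 ∧ j = 3 ∧ k = 7 then (1:ℝ) else 0)

def muBarC (t : ℝ) (i j k : Fin 9) : ℝ := muBarHalf t i j k - muBarHalf t j i k

/-- The two-step nilpotent Lie bracket `μ̄_t` on `ℝ⁹`. -/
def muBar (t : ℝ) (X Y : Fin 9 → ℝ) : Fin 9 → ℝ :=
  fun k => ∑ i, ∑ j, X i * Y j * muBarC t i j k

/-- The space of (skew-symmetric bilinear) bracket candidates on `ℝ⁹`,
represented as bare functions. -/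
abbrev NilBracket := (Fin 9 → ℝ) → (Fin 9 → ℝ) → Fin 9 → ℝ

/-- The Ricci operator of `(ℝ⁹, ν)` w.r.t. the canonical inner product, as a matrix in the
canonical basis:
`⟨Ric_ν X, Y⟩ = -(1/2)∑ᵢⱼ⟨ν(X,eᵢ),eⱼ⟩⟨ν(Y,eᵢ),eⱼ⟩ + (1/4)∑ᵢⱼ⟨ν(eᵢ,eⱼ),X⟩⟨ν(eᵢ,eⱼ),Y⟩`. -/
def ric (ν : NilBracket) : Matrix (Fin 9) (Fin 9) ℝ :=
  fun a b =>
    -(1/2) * (∑ i, ∑ j, ν (e a) (e i) j * ν (e b) (e i) j)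
    + (1/4) * (∑ i, ∑ j, ν (e i) (e j) a * ν (e i) (e j) b)

/-- `D` is a derivation of the algebra `(ℝ⁹, ν)`. -/
def IsDerivation (ν : NilBracket) (D : Matrix (Fin 9) (Fin 9) ℝ) : Prop :=
  ∀ X Y : Fin 9 → ℝ, D.mulVec (ν X Y) = ν (D.mulVec X) Y + ν X (D.mulVec Y)

/-- The basis `e₁,…,e₆` of `v = span(e₁,…,e₆) ⊆ ℝ⁹`, indexed by `Fin 6`. -/
def E (a : Fin 6) : Fin 9 → ℝ := e (Fin.castLE (by norm_num) a)

/-- The skew-symmetric 6×6 matrix `J_ν(w)`, `w = x e₇ + y e₈ + z e₉`, defined by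
`⟨J_ν(w) v₁, v₂⟩ = ⟨ν(v₁,v₂), w⟩` for `v₁,v₂ ∈ span(e₁,…,e₆)`. -/
def Jmat (ν : NilBracket) (x y z : ℝ) : Matrix (Fin 6) (Fin 6) ℝ :=
  fun a b => ν (E b) (E a) 6 * x + ν (E b) (E a) 7 * y + ν (E b) (E a) 8 * z

/-- The `GL₉(ℝ)` action on brackets: `(g·ν)(X,Y) = g ν(g⁻¹X, g⁻¹Y)`. -/
def act (g : Matrix (Fin 9) (Fin 9) ℝ) (ν : NilBracket) : NilBracket :=
  fun X Y => g.mulVec (ν (g⁻¹.mulVec X) (g⁻¹.mulVec Y))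

/-- The algebras `(ℝ⁹, ν)` and `(ℝ⁹, ν')` are isomorphic:
there is `g ∈ GL₉(ℝ)` with `g ν(X,Y) = ν'(gX, gY)` for all `X, Y`. -/
def LieIso (ν ν' : NilBracket) : Prop :=
  ∃ g : Matrix (Fin 9) (Fin 9) ℝ, IsUnit g ∧
    ∀ X Y : Fin 9 → ℝ, g.mulVec (ν X Y) = ν' (g.mulVec X) (g.mulVec Y)

/-! The matrix `J_{μ_t}(x e₇ + y e₈ + z e₉)` is explicit, and its fourth-power trace is
`2(1+t⁴)(x²+y²+z²)² - 4(1-t²)²(x²y²+y²z²+z²x²)`. On the unit sphere the first term is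
`2(1+t⁴)` and the second is a nonpositive correction, which vanishes at `(1,0,0)`. -/

lemma mu_e_e (t : ℝ) (p q k : Fin 9) : mu t (e p) (e q) k = muC t p q k := by
  simp [mu, e, Pi.single_apply, ite_mul]

lemma Jmat_mu (t x y z : ℝ) :
    Jmat (mu t) x y z =
      !![0,     0,      0,     -(t*z), 0,   -y;
         0,     0,      z,     0,      t*y, 0;
         0,     -z,     0,     0,      0,   -(t*x);
         t*z,   0,      0,     0,      x,   0;
         0,     -(t*y), 0,     -x,     0,   0;
         y,     0,      t*x,   0,      0,   0] := by
  ext a b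
  fin_cases a <;> fin_cases b <;>
    simp [Jmat, E, mu_e_e, muC, muHalf, Fin.castLE, Fin.ext_iff]

lemma trace_Jmat_mu_pow_four (t x y z : ℝ) :
    trace (Jmat (mu t) x y z ^ 4) =
      2 * (1 + t^4) * (x^2 + y^2 + z^2)^2 - 4 * (1 - t^2)^2 * (x^2*y^2 + y^2*z^2 + z^2*x^2) := by
  rw [Jmat_mu, pow_succ, pow_succ, pow_succ, pow_one]
  simp [trace, Fin.sum_univ_succ]
  ring

/-- the maximum of `g_t(x,y,z) = tr(J_{μ_t}(x e₇+y e₈+z e₉)⁴)` over the unit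
sphere `x²+y²+z²=1` equals `2(1+t⁴)`, attained at `(1,0,0)`. -/
theorem statement5 (t : ℝ) :
    (∀ x y z : ℝ, x^2 + y^2 + z^2 = 1 →
      Matrix.trace ((Jmat (mu t) x y z)^4) ≤ 2*(1+t^4)) ∧
    (1:ℝ)^2 + 0^2 + 0^2 = 1 ∧
    Matrix.trace ((Jmat (mu t) 1 0 0)^4) = 2*(1+t^4) := by
  refine ⟨fun x y z hsphere => ?_, by norm_num, by rw [trace_Jmat_mu_pow_four]; ring⟩
  rw [trace_Jmat_mu_pow_four, hsphere]
  have hcorrection : 0 ≤ (1 - t^2)^2 * (x^2*y^2 + y^2*z^2 + z^2*x^2) := by positivity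
  linarith
end
end

section
/- For every t ∈ ℝ and all x,y,z ∈ ℝ, the determinant of the 6×6 matrix J_{μ̄_t}(x·e₇ + y·e₈ + z·e₉) equals (t·(x³+y³) − (t³+1)·xyz)² (equivalently, the Pfaffian form of n̄_t = (ℝ⁹, μ̄_t) is f_{μ̄_t}(x,y,z) = t(x³+y³) − (t³+1)xyz up to sign). -/
open Matrix Finset Real Filter

noncomputable section

/-!
Every bracket of `μ̄_t` pairs an odd-numbered with an even-numbered basis vector, so both
`span(e₁,e₃,e₅)` and `span(e₂,e₄,e₆)` are isotropic for the skew form `J_{μ̄_t}(w)`. Listing the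
basis as `e₂,e₄,e₆,e₁,e₃,e₅` therefore puts `J_{μ̄_t}(w)` in the shape `[[0, B], [-Bᵀ, 0]]`,
whose determinant is `(det B)²`, and expanding the `3 × 3` determinant gives `det B = -f_{μ̄_t}`.
-/

namespace Matrix

theorem det_J (l R : Type*) [DecidableEq l] [Fintype l] [CommRing R] : (J l R).det = 1 := by
  have : J l R = fromBlocks 1 (-1) 0 1 * fromBlocks 1 (-1) 1 0 := by
    simp [J, fromBlocks_multiply]
  rw [this, det_mul, det_fromBlocks_zero₂₁, det_fromBlocks_one₁₁]
  simp

theorem det_fromBlocks_zero_neg_transpose_zero {n R : Type*} [DecidableEq n] [Fintype n]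
    [CommRing R] (A : Matrix n n R) : (fromBlocks 0 A (-Aᵀ) 0).det = A.det ^ 2 := by
  have : fromBlocks 0 A (-Aᵀ) 0 = fromBlocks A 0 0 Aᵀ * (J n R)ᵀ := by
    simp [J, fromBlocks_transpose, fromBlocks_multiply]
  rw [this, det_mul, det_transpose, det_J, det_fromBlocks_zero₂₁, det_transpose]
  ring

end Matrix

/-- `inl i ↦ e₂,e₄,e₆` and `inr i ↦ e₁,e₃,e₅` (indices of `Fin 6` are 0-based). -/
def evenOddEquiv : Fin 3 ⊕ Fin 3 ≃ Fin 6 :=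
  Equiv.ofBijective (Sum.elim ![1, 3, 5] ![0, 2, 4]) (by decide)

def jBlock (t x y z : ℝ) : Matrix (Fin 3) (Fin 3) ℝ :=
  !![x, z, t * y; t * z, y, x; y, t * x, 0]

lemma muBar_e (t : ℝ) (i j k : Fin 9) : muBar t (e i) (e j) k = muBarC t i j k := by
  simp [muBar, e, Pi.single_apply, ite_mul]

lemma Jmat_muBar_submatrix_evenOddEquiv (t x y z : ℝ) :
    (Jmat (muBar t) x y z).submatrix evenOddEquiv evenOddEquiv =
      fromBlocks 0 (jBlock t x y z) (-(jBlock t x y z)ᵀ) 0 := by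
  ext (i | i) (j | j) <;> fin_cases i <;> fin_cases j <;>
    simp [evenOddEquiv, jBlock, Jmat, E, muBar_e, muBarC, muBarHalf, muTildeHalf, muHalf,
      Fin.ext_iff]

lemma det_jBlock (t x y z : ℝ) :
    (jBlock t x y z).det = -(t * (x ^ 3 + y ^ 3) - (t ^ 3 + 1) * (x * y * z)) := by
  rw [jBlock, det_fin_three]
  simp only [of_apply, cons_val', cons_val_zero, cons_val_one, cons_val_two, empty_val',
    cons_val_fin_one, head_cons, tail_cons, head_fin_const]
  ring

/-- `det J_{μ̄_t}(x e₇ + y e₈ + z e₉) = (t(x³+y³) - (t³+1) xyz)²`. -/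
theorem statement15 (t x y z : ℝ) :
    (Jmat (muBar t) x y z).det = (t*(x^3 + y^3) - (t^3+1)*(x*y*z))^2 := by
  rw [← det_submatrix_equiv_self evenOddEquiv, Jmat_muBar_submatrix_evenOddEquiv,
    det_fromBlocks_zero_neg_transpose_zero, det_jBlock, neg_sq]
end
end
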